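/- arXiv:2312.09617 — 2 statements merged into one kernel-verified Lean document; each statement's English description precedes it below -/
import Mathlib

section
/- Let λ ≥ 1 be real and let f belong to the class S*_{Σ,q}(λ;φ). Then the coefficients of the associated Carathéodory functions satisfy d₁ = −c₁, and the second Maclaurin coefficient of f is a₂ = E₁c₁/(2λ[2]_q). -/
open Complex Metric Set

noncomputable def symQ (q x : ℝ) : ℝ := (Real.rpow q x - Real.rpow q (-x)) / (q - q⁻¹)

noncomputable def Dq (q : ℝ) (f : ℂ → ℂ) (z : ℂ) : ℂ :=
  if z = 0 then deriv f 0
  else (f ((q : ℂ) * z) - f (z / (q : ℂ))) / (((q : ℂ) - (q : ℂ)⁻¹) * z)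

def IsSchwarz (u : ℂ → ℂ) : Prop :=
  AnalyticOnNhd ℂ u (ball 0 1) ∧ u 0 = 0 ∧ ∀ z ∈ ball (0 : ℂ) 1, u z ∈ ball (0 : ℂ) 1

/-!
Both coefficient identities come from differentiating the two subordinations at `0`.
Write `F z = z • D z` with `D = dslope F 0`, so `D 0 = F'(0) = 1` and `D'(0)` is the second
coefficient of `F`. Then `D_q F z = (q D(qz) - q⁻¹ D(q⁻¹z)) / (q - q⁻¹)` and
`F z - F(-z) = z (D z + D(-z))`, so off `0` the left-hand side equals
`2 (D_q F)^λ / (D z + D(-z))`, which is differentiable at `0` with derivative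
`λ [2]_q D'(0)`. The right-hand side `φ ∘ u` has derivative `E₁ u'(0) = E₁ c₁ / 2`.
For the inverse `g`, the identity `D_g(f z) · D_f(z) = 1` shows that its second coefficient
is `-a₂`, and adding the two resulting equations gives `d₁ = -c₁`.
-/

open Filter Topology FormalMultilinearSeries

section Analytic

variable {𝕜 : Type*} [NontriviallyNormedField 𝕜]

theorem hasFPowerSeriesAt_ofScalars_of_tsum {F : 𝕜 → 𝕜} {k : ℕ → 𝕜}
    (hF : ∀ᶠ z in 𝓝 0, F z = ∑' n, k n * z ^ n) (hne : ∀ᶠ z in 𝓝[≠] 0, F z ≠ 0) :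
    HasFPowerSeriesAt F (ofScalars 𝕜 k) 0 := by
  rw [hasFPowerSeriesAt_iff]
  filter_upwards [hF, eventually_nhdsWithin_iff.mp hne] with z hFz hz
  simp only [coeff_ofScalars, smul_eq_mul, zero_add, mul_comm (z ^ _)]
  -- off `0`, the value `F z ≠ 0` rules out the junk value `0` of a divergent `tsum`
  have hsum : Summable fun n => k n * z ^ n := by
    rcases eq_or_ne z 0 with rfl | hz0
    · exact (hasSum_single 0 fun n hn => by simp [hn]).summable
    · by_contra h
      exact hz hz0 (hFz.trans (tsum_eq_zero_of_not_summable h))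
  exact hFz ▸ hsum.hasSum

theorem hasDerivAt_zero_of_tsum {F : 𝕜 → 𝕜} {k : ℕ → 𝕜}
    (hF : ∀ᶠ z in 𝓝 0, F z = ∑' n, k n * z ^ n) (hne : ∀ᶠ z in 𝓝[≠] 0, F z ≠ 0) :
    HasDerivAt F (k 1) 0 := by
  simpa [ofScalars_apply_eq] using (hasFPowerSeriesAt_ofScalars_of_tsum hF hne).hasDerivAt

theorem HasFPowerSeriesAt.hasDerivAt_dslope {E : Type*} [NormedAddCommGroup E] [NormedSpace 𝕜 E]
    {f : 𝕜 → E} {p : FormalMultilinearSeries 𝕜 𝕜 E} {x : 𝕜} (h : HasFPowerSeriesAt f p x) :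
    HasDerivAt (dslope f x) (p.coeff 2) x := by
  simpa [coeff_fslope] using h.has_fpower_series_dslope_fslope.hasDerivAt

theorem sub_comp_neg_eq_mul_dslope (F : 𝕜 → 𝕜) (z : 𝕜) :
    F z - F (-z) = z * (dslope F 0 z + dslope F 0 (-z)) := by
  have h₁ := sub_smul_dslope F 0 z
  have h₂ := sub_smul_dslope F 0 (-z)
  simp only [sub_zero, smul_eq_mul] at h₁ h₂
  linear_combination h₂ - h₁

theorem deriv_eq_one_of_leftInverse {f g : 𝕜 → 𝕜} (hg : DifferentiableAt 𝕜 g 0)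
    (hf : HasDerivAt f 1 0) (hf0 : f 0 = 0) (hgf : ∀ᶠ z in 𝓝 0, g (f z) = z) :
    deriv g 0 = 1 := by
  have h := (hg.hasDerivAt.comp_of_eq 0 hf hf0.symm).unique
    ((hasDerivAt_id 0).congr_of_eventuallyEq hgf)
  simpa using h

theorem hasDerivAt_dslope_of_leftInverse {f g : 𝕜 → 𝕜} {b : 𝕜} (hg : AnalyticAt 𝕜 g 0)
    (hf : HasDerivAt f 1 0) (hf0 : f 0 = 0) (hg0 : g 0 = 0) (hgf : ∀ᶠ z in 𝓝 0, g (f z) = z)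
    (hDf : HasDerivAt (dslope f 0) b 0) :
    HasDerivAt (dslope g 0) (-b) 0 := by
  obtain ⟨p, hp⟩ := hg
  have hg'0 := deriv_eq_one_of_leftInverse hp.differentiableAt hf hf0 hgf
  have hprod : (fun z => dslope g 0 (f z) * dslope f 0 z) =ᶠ[𝓝 0] fun _ => 1 := by
    filter_upwards [hgf] with z hz
    rcases eq_or_ne z 0 with rfl | hz0
    · rw [hf0, dslope_same, dslope_same, hg'0, hf.deriv, one_mul]
    have hfz : f z ≠ 0 := fun h => hz0 (by rw [← hz, h, hg0])
    rw [dslope_of_ne _ hfz, dslope_of_ne _ hz0, slope_def_field, slope_def_field, hz, hg0, hf0]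
    field_simp
  have hderiv := ((hp.hasDerivAt_dslope.comp_of_eq 0 hf hf0.symm).mul hDf).congr_of_eventuallyEq
    hprod.symm
  simp only [Function.comp_apply, hf0, dslope_same, hg'0, hf.deriv] at hderiv
  have hcoeff : p.coeff 2 = -b := by
    linear_combination hderiv.unique (hasDerivAt_const 0 1)
  exact hcoeff ▸ hp.hasDerivAt_dslope

theorem eq_two_mul_of_hasDerivAt_cayley {u : 𝕜 → 𝕜} {u' c₁ : 𝕜} (hu : HasDerivAt u u' 0)
    (hu0 : u 0 = 0) (hc : HasDerivAt (fun z => (1 + u z) / (1 - u z)) c₁ 0) :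
    c₁ = 2 * u' := by
  have h := ((hasDerivAt_const 0 1).add hu).div ((hasDerivAt_const 0 1).sub hu) (by simp [hu0])
  rw [hc.unique h]
  simp [hu0]
  ring

end Analytic

theorem IsSchwarz.hasDerivAt {u : ℂ → ℂ} (hu : IsSchwarz u) : HasDerivAt u (deriv u 0) 0 :=
  (hu.1 0 (mem_ball_self one_pos)).differentiableAt.hasDerivAt

theorem IsSchwarz.coeff_one_eq_two_mul_deriv {u : ℂ → ℂ} (hu : IsSchwarz u) {c : ℕ → ℂ}
    (hc : ∀ z ∈ ball (0 : ℂ) 1, (1 + u z) / (1 - u z) = ∑' n, c n * z ^ n) :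
    c 1 = 2 * deriv u 0 := by
  have hball : ball (0 : ℂ) 1 ∈ 𝓝 0 := ball_mem_nhds 0 one_pos
  refine eq_two_mul_of_hasDerivAt_cayley hu.hasDerivAt hu.2.1
    (hasDerivAt_zero_of_tsum (eventually_of_mem hball hc) ?_)
  filter_upwards [nhdsWithin_le_nhds hball] with z hz
  have hn : ‖u z‖ < 1 := by simpa using hu.2.2 z hz
  refine div_ne_zero (fun h => ?_) (fun h => ?_)
  · rw [show u z = -1 by linear_combination h] at hn; norm_num at hn
  · rw [show u z = 1 by linear_combination -h] at hn; norm_num at hn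

theorem ne_zero_of_sub_inv_ne_zero {K : Type*} [DivisionRing K] {x : K} (h : x - x⁻¹ ≠ 0) :
    x ≠ 0 := by
  rintro rfl
  simp at h

theorem symQ_two {q : ℝ} (hq : q - q⁻¹ ≠ 0) : symQ q 2 = q + q⁻¹ := by
  have h₁ : Real.rpow q 2 = q ^ 2 := Real.rpow_two q
  have h₂ : Real.rpow q (-2) = (q ^ 2)⁻¹ := by
    rw [show Real.rpow q (-2) = q ^ ((-2 : ℤ) : ℝ) by norm_num, Real.rpow_intCast]
    simp [zpow_neg]
  rw [symQ, h₁, h₂, eq_comm, eq_div_iff hq]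
  have hq0 := ne_zero_of_sub_inv_ne_zero hq
  field_simp
  ring

theorem Dq_eq_dslope {q : ℝ} (hq : q - q⁻¹ ≠ 0) (F : ℂ → ℂ) (z : ℂ) :
    Dq q F z =
      (q * dslope F 0 (q * z) - (q : ℂ)⁻¹ * dslope F 0 ((q : ℂ)⁻¹ * z)) / (q - (q : ℂ)⁻¹) := by
  have hq0 : (q : ℂ) ≠ 0 := by exact_mod_cast ne_zero_of_sub_inv_ne_zero hq
  have hqC : (q : ℂ) - (q : ℂ)⁻¹ ≠ 0 := by exact_mod_cast hq
  unfold Dq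
  split_ifs with hz
  · simp only [hz, mul_zero, dslope_same]
    rw [← sub_mul, mul_div_cancel_left₀ _ hqC]
  have h₁ := sub_smul_dslope F 0 (q * z)
  have h₂ := sub_smul_dslope F 0 ((q : ℂ)⁻¹ * z)
  simp only [sub_zero, smul_eq_mul] at h₁ h₂
  rw [div_eq_inv_mul z, show F (q * z) - F ((q : ℂ)⁻¹ * z) =
      (q * dslope F 0 (q * z) - (q : ℂ)⁻¹ * dslope F 0 ((q : ℂ)⁻¹ * z)) * z
    by linear_combination h₂ - h₁, mul_div_mul_right _ _ hz]

theorem hasDerivAt_Dq_zero {q : ℝ} (hq : q - q⁻¹ ≠ 0) {F : ℂ → ℂ} {b : ℂ}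
    (hD : HasDerivAt (dslope F 0) b 0) : HasDerivAt (Dq q F) (symQ q 2 * b) 0 := by
  have hqC : (q : ℂ) - (q : ℂ)⁻¹ ≠ 0 := by exact_mod_cast hq
  have hscale (c : ℂ) : HasDerivAt (fun z => dslope F 0 (c * z)) (b * c) 0 :=
    hD.comp_of_eq 0 ((hasDerivAt_id 0).const_mul c |>.congr_deriv (mul_one c)) (mul_zero c).symm
  rw [funext (Dq_eq_dslope hq F)]
  refine ((((hscale q).const_mul (q : ℂ)).sub ((hscale (q : ℂ)⁻¹).const_mul (q : ℂ)⁻¹)).div_const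
    _).congr_deriv ?_
  rw [div_eq_iff hqC]
  push_cast [symQ_two hq]
  ring

theorem mul_symQ_two_mul_eq_of_subordination {q lam : ℝ} (hq : q - q⁻¹ ≠ 0)
    {F φ u : ℂ → ℂ} {b φ' u' : ℂ} (hF : deriv F 0 = 1) (hD : HasDerivAt (dslope F 0) b 0)
    (hφ : HasDerivAt φ φ' 0) (hu : HasDerivAt u u' 0) (hu0 : u 0 = 0)
    (hsub : ∀ᶠ z in 𝓝[≠] 0, 2 * z * Dq q F z ^ (lam : ℂ) / (F z - F (-z)) = φ (u z)) :
    lam * symQ q 2 * b = φ' * u' := by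
  set D := dslope F 0 with hD_def
  have hD0 : D 0 = 1 := by rw [hD_def, dslope_same, hF]
  have hDq0 : Dq q F 0 = 1 := by rw [Dq, if_pos rfl, hF]
  -- the quotient with the factor `z` cancelled; unlike the quotient, it is differentiable at `0`
  set H : ℂ → ℂ := fun z => 2 * Dq q F z ^ (lam : ℂ) / (D z + D (-z))
  have hpow := (hasDerivAt_Dq_zero hq hD).cpow_const (c := lam) (by simp [hDq0])
  have hH : HasDerivAt H (lam * symQ q 2 * b) 0 := by
    have hodd : HasDerivAt (fun z => D z + D (-z)) (b + b * -1) 0 :=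
      hD.add (hD.comp_of_eq 0 (hasDerivAt_neg' 0) neg_zero.symm)
    refine ((hpow.const_mul 2).div hodd (by simp [hD0])).congr_deriv ?_
    simp [hDq0, hD0]
    ring
  have hφu : HasDerivAt (φ ∘ u) (φ' * u') 0 := hφ.comp_of_eq 0 hu hu0.symm
  have hHφu : H =ᶠ[𝓝 0] φ ∘ u := by
    refine (hH.continuousAt.eventuallyEq_nhds_iff_eventuallyEq_nhdsNE hφu.continuousAt).mp ?_
    filter_upwards [hsub, self_mem_nhdsWithin] with z hz hz0
    rw [Function.comp_apply, ← hz, sub_comp_neg_eq_mul_dslope, mul_right_comm, mul_comm z,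
      mul_div_mul_right _ _ hz0]
  exact hH.unique (hφu.congr_of_eventuallyEq hHφu)

theorem coeff_a2_eq_general
    (q : ℝ) (hq0 : 0 < q) (hq1 : q < 1)
    (f g : ℂ → ℂ) (a : ℕ → ℂ)
    (hf0 : f 0 = 0) (hf'0 : deriv f 0 = 1)
    (hfa : ∀ z ∈ ball (0 : ℂ) 1, f z = ∑' n, a n * z ^ n)
    (hfinj : InjOn f (ball 0 1))
    (hg : AnalyticOnNhd ℂ g (ball 0 1)) (hg0 : g 0 = 0)
    (hgf : ∀ᶠ z in nhds (0 : ℂ), g (f z) = z)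
    (φ : ℂ → ℂ) (E : ℕ → ℂ) (E1 : ℝ)
    (hφre : ∀ z ∈ ball (0 : ℂ) 1, 0 < (φ z).re)
    (hφE : ∀ z ∈ ball (0 : ℂ) 1, φ z = ∑' n, E n * z ^ n)
    (hE1 : E 1 = (E1 : ℂ)) (hE1pos : 0 < E1)
    (lam : ℝ) (hlam : 1 ≤ lam)
    (u v : ℂ → ℂ) (hu : IsSchwarz u) (hv : IsSchwarz v)
    (hsubf : ∀ z ∈ ball (0 : ℂ) 1, z ≠ 0 →
      2 * z * Dq q f z ^ (lam : ℂ) / (f z - f (-z)) = φ (u z))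
    (hsubg : ∀ w ∈ ball (0 : ℂ) 1, w ≠ 0 →
      2 * w * Dq q g w ^ (lam : ℂ) / (g w - g (-w)) = φ (v w))
    (c d : ℕ → ℂ)
    (hc : ∀ z ∈ ball (0 : ℂ) 1, (1 + u z) / (1 - u z) = ∑' n, c n * z ^ n)
    (hd : ∀ w ∈ ball (0 : ℂ) 1, (1 + v w) / (1 - v w) = ∑' n, d n * w ^ n)
    :
    d 1 = -c 1 ∧ a 2 = (E1 : ℂ) * c 1 / (2 * (lam : ℂ) * (symQ q 2 : ℂ)) := by
  have hq : q - q⁻¹ ≠ 0 := by linarith [(one_lt_inv₀ hq0).mpr hq1]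
  have h01 : (0 : ℂ) ∈ ball 0 1 := mem_ball_self one_pos
  have hball : ball (0 : ℂ) 1 ∈ 𝓝 0 := ball_mem_nhds 0 one_pos
  have hpf : HasFPowerSeriesAt f (ofScalars ℂ a) 0 := by
    refine hasFPowerSeriesAt_ofScalars_of_tsum (eventually_of_mem hball hfa) ?_
    filter_upwards [nhdsWithin_le_nhds hball, self_mem_nhdsWithin] with z hz hz0 hfz
    exact hz0 (hfinj hz h01 (hfz.trans hf0.symm))
  have hφ : HasDerivAt φ E1 0 := by
    refine hE1 ▸ hasDerivAt_zero_of_tsum (eventually_of_mem hball hφE) ?_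
    filter_upwards [nhdsWithin_le_nhds hball] with z hz hφz
    simpa [hφz] using hφre z hz
  have hDf : HasDerivAt (dslope f 0) (a 2) 0 := by
    simpa [coeff_ofScalars] using hpf.hasDerivAt_dslope
  have hf' : HasDerivAt f 1 0 := hf'0 ▸ hpf.differentiableAt.hasDerivAt
  have hg'0 := deriv_eq_one_of_leftInverse (hg 0 h01).differentiableAt hf' hf0 hgf
  have hDg := hasDerivAt_dslope_of_leftInverse (hg 0 h01) hf' hf0 hg0 hgf hDf
  have hcf := mul_symQ_two_mul_eq_of_subordination hq hf'0 hDf hφ hu.hasDerivAt hu.2.1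
    (eventually_nhdsWithin_iff.mpr (eventually_of_mem hball hsubf))
  have hcg := mul_symQ_two_mul_eq_of_subordination hq hg'0 hDg hφ hv.hasDerivAt hv.2.1
    (eventually_nhdsWithin_iff.mpr (eventually_of_mem hball hsubg))
  have hE1ne : (E1 : ℂ) ≠ 0 := by exact_mod_cast hE1pos.ne'
  have hlam0 : (lam : ℂ) ≠ 0 := by exact_mod_cast (by linarith : lam ≠ 0)
  have hsym : (symQ q 2 : ℂ) ≠ 0 := by
    rw [symQ_two hq]
    exact_mod_cast (by positivity : q + q⁻¹ ≠ 0)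
  rw [hu.coeff_one_eq_two_mul_deriv hc, hv.coeff_one_eq_two_mul_deriv hd]
  constructor
  · exact mul_left_cancel₀ hE1ne (by linear_combination -2 * hcf - 2 * hcg)
  · rw [eq_div_iff (by simp [hlam0, hsym])]
    linear_combination 2 * hcf

theorem coeff_a2_eq
    (q : ℝ) (hq0 : 0 < q) (hq1 : q < 1)
    (f g : ℂ → ℂ) (a : ℕ → ℂ)
    (hf : AnalyticOnNhd ℂ f (ball 0 1)) (hf0 : f 0 = 0) (hf'0 : deriv f 0 = 1)
    (hfa : ∀ z ∈ ball (0 : ℂ) 1, f z = ∑' n, a n * z ^ n)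
    (ha0 : a 0 = 0) (ha1 : a 1 = 1)
    (hfinj : InjOn f (ball 0 1))
    (hg : AnalyticOnNhd ℂ g (ball 0 1)) (hg0 : g 0 = 0)
    (hginj : InjOn g (ball 0 1))
    (hgf : ∀ᶠ z in nhds (0 : ℂ), g (f z) = z)
    (φ : ℂ → ℂ) (E : ℕ → ℂ) (E1 : ℝ)
    (hφa : AnalyticOnNhd ℂ φ (ball 0 1)) (hφ0 : φ 0 = 1)
    (hφre : ∀ z ∈ ball (0 : ℂ) 1, 0 < (φ z).re)
    (hφE : ∀ z ∈ ball (0 : ℂ) 1, φ z = ∑' n, E n * z ^ n)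
    (hE0 : E 0 = 1) (hE1 : E 1 = (E1 : ℂ)) (hE1pos : 0 < E1)
    (lam : ℝ) (hlam : 1 ≤ lam)
    (u v : ℂ → ℂ) (hu : IsSchwarz u) (hv : IsSchwarz v)
    (hsubf : ∀ z ∈ ball (0 : ℂ) 1, z ≠ 0 →
      2 * z * Dq q f z ^ (lam : ℂ) / (f z - f (-z)) = φ (u z))
    (hsubg : ∀ w ∈ ball (0 : ℂ) 1, w ≠ 0 →
      2 * w * Dq q g w ^ (lam : ℂ) / (g w - g (-w)) = φ (v w))
    (c d : ℕ → ℂ) (hc0 : c 0 = 1) (hd0 : d 0 = 1)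
    (hc : ∀ z ∈ ball (0 : ℂ) 1, (1 + u z) / (1 - u z) = ∑' n, c n * z ^ n)
    (hd : ∀ w ∈ ball (0 : ℂ) 1, (1 + v w) / (1 - v w) = ∑' n, d n * w ^ n)
    :
    d 1 = -c 1 ∧ a 2 = (E1 : ℂ) * c 1 / (2 * (lam : ℂ) * (symQ q 2 : ℂ)) :=
  coeff_a2_eq_general q hq0 hq1 f g a hf0 hf'0 hfa hfinj hg hg0 hgf φ E E1 hφre hφE hE1 hE1pos lam
    hlam u v hu hv hsubf hsubg c d hc hd
end

section
/- Let μ ≥ 0 and λ ≥ 1 be real and let f belong to the class S*_{Σ,q}^η(μ,λ;φ). Then d₁ = −c₁ and λ·M₂·[2]_q·L₂·a₂ = (1/2)·E₁·c₁. -/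
open Complex Metric Set

noncomputable def taylorCoeff (h : ℂ → ℂ) (n : ℕ) : ℂ := iteratedDeriv n h 0 / (n.factorial : ℂ)

noncomputable def Lcoef (q η : ℝ) (n : ℕ) : ℝ := symQ q (1 + η) / symQ q ((n : ℝ) + η)

noncomputable def Jop (q η : ℝ) (h : ℂ → ℂ) (z : ℂ) : ℂ :=
  ∑' n, (Lcoef q η n : ℂ) * taylorCoeff h n * z ^ n

noncomputable def Phi (q η lam mu : ℝ) (h : ℂ → ℂ) (z : ℂ) : ℂ :=
  (2 * z * Dq q (Jop q η h) z ^ (lam : ℂ) / (Jop q η h z - Jop q η h (-z))) ^ (mu : ℂ) *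
    (2 * Dq q (fun ζ => ζ * Dq q (Jop q η h) ζ) z ^ (lam : ℂ) /
        Dq q (fun ζ => Jop q η h ζ - Jop q η h (-ζ)) z) ^ ((1 - mu : ℝ) : ℂ)

noncomputable def M2v (q mu : ℝ) : ℝ := mu - (mu - 1) * symQ q 2
noncomputable def M3v (q mu : ℝ) : ℝ := mu - (mu - 1) * symQ q 3
noncomputable def N2v (q mu : ℝ) : ℝ := mu - (mu - 1) * symQ q 2 ^ 2

noncomputable def Omegav (q η lam mu : ℝ) : ℝ :=
  2 * (lam * symQ q 3 - 1) * M3v q mu * Lcoef q η 3 +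
    lam * (lam * M2v q mu ^ 2 - N2v q mu) * symQ q 2 ^ 2 * Lcoef q η 2 ^ 2

noncomputable def Thetav (q η lam mu E1 : ℝ) (E : ℕ → ℂ) : ℂ :=
  ((2 * (lam * symQ q 3 - 1) * M3v q mu * E1 ^ 2 * Lcoef q η 3 : ℝ) : ℂ) +
    (lam : ℂ) * (((lam * M2v q mu ^ 2 : ℝ) : ℂ) * (((E1 ^ 2 + 2 * E1 : ℝ) : ℂ) - 2 * E 2) -
        ((N2v q mu * E1 ^ 2 : ℝ) : ℂ)) * ((symQ q 2 ^ 2 * Lcoef q η 2 ^ 2 : ℝ) : ℂ)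

noncomputable def Gammav (q η lam : ℝ) : ℝ :=
  2 * (lam * symQ q 3 - 1) * Lcoef q η 3 + lam * (lam - 1) * symQ q 2 ^ 2 * Lcoef q η 2 ^ 2

noncomputable def Xiv (q η lam E1 : ℝ) (E : ℕ → ℂ) : ℂ :=
  ((2 * (lam * symQ q 3 - 1) * E1 ^ 2 * Lcoef q η 3 : ℝ) : ℂ) +
    (lam : ℂ) * ((((lam - 1) * E1 ^ 2 : ℝ) : ℂ) + 2 * (lam : ℂ) * ((E1 : ℂ) - E 2)) *
      ((symQ q 2 ^ 2 * Lcoef q η 2 ^ 2 : ℝ) : ℂ)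

noncomputable def Psiv (q η lam : ℝ) : ℝ :=
  2 * (lam * symQ q 3 - 1) * symQ q 3 * Lcoef q η 3 +
    lam * (lam - 1) * symQ q 2 ^ 4 * Lcoef q η 2 ^ 2

noncomputable def Upsv (q η lam E1 : ℝ) (E : ℕ → ℂ) : ℂ :=
  ((2 * (lam * symQ q 3 - 1) * symQ q 3 * E1 ^ 2 * Lcoef q η 3 : ℝ) : ℂ) +
    (lam : ℂ) * ((((lam - 1) * E1 ^ 2 : ℝ) : ℂ) + 2 * (lam : ℂ) * ((E1 : ℂ) - E 2)) *
      ((symQ q 2 ^ 4 * Lcoef q η 2 ^ 2 : ℝ) : ℂ)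

/-!
The Bernardi transform `J h` has Maclaurin coefficients `L_n b_n`, where `b_n` are those of `h`.
On a punctured neighbourhood of `0` each of the four quotients building `Φ_h` is a power series
whose first two coefficients are explicit: `D_q(Jh)` and `D_q(ζ D_q(Jh))` start with
`1 + [2] L₂ b₂ z` and `1 + [2]² L₂ b₂ z`, while `(Jh(z) - Jh(-z))/z` and `D_q(Jh(ζ) - Jh(-ζ))`
start with `2 + 0 z`. Hence `Φ_h` extends across `0` with value `1` and derivative
`λ M₂ [2] L₂ b₂`. Comparing with `(φ ∘ u)'(0) = E₁ u'(0) = E₁ c₁ / 2` gives the identity for `f`.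
For the inverse `g` one has `b₂ = -a₂`, so the same identity reads `-λ M₂ [2] L₂ a₂ = E₁ d₁ / 2`,
and since `E₁ ≠ 0` the two together give `d₁ = -c₁`.
-/

open Filter Topology FormalMultilinearSeries

section symQ

variable {q : ℝ}

lemma sub_inv_ne_zero (hq0 : 0 < q) (hq1 : q ≠ 1) : q - q⁻¹ ≠ 0 := by
  intro h
  have : q * q = 1 := by field_simp at h; linarith
  rcases mul_self_eq_one_iff.mp this with h' | h' <;> [exact hq1 h'; linarith]

lemma symQ_natCast (hq0 : 0 < q) (m : ℕ) : symQ q m = (q ^ m - (q ^ m)⁻¹) / (q - q⁻¹) := by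
  change (q ^ (m : ℝ) - q ^ (-(m : ℝ))) / _ = _
  rw [Real.rpow_neg hq0.le, Real.rpow_natCast]

lemma symQ_zero (q : ℝ) : symQ q 0 = 0 := by
  simp [symQ]

lemma symQ_one (hq0 : 0 < q) (hq1 : q ≠ 1) : symQ q 1 = 1 := by
  have h := symQ_natCast hq0 1
  rwa [Nat.cast_one, pow_one, div_self (sub_inv_ne_zero hq0 hq1)] at h

lemma mul_pow_sub_div_pow (hq0 : 0 < q) (hq1 : q ≠ 1) (m : ℕ) (z : ℂ) :
    ((q : ℂ) * z) ^ m - (z / q) ^ m = ((q : ℂ) - (q : ℂ)⁻¹) * symQ q m * z ^ m := by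
  have hq : (q : ℂ) ≠ 0 := by exact_mod_cast hq0.ne'
  have hd : (q : ℂ) - (q : ℂ)⁻¹ ≠ 0 := by exact_mod_cast sub_inv_ne_zero hq0 hq1
  rw [symQ_natCast hq0]
  push_cast
  rw [mul_div_cancel₀ _ hd, mul_pow, div_pow, div_eq_mul_inv]
  ring

lemma symQ_strictMono (hq0 : 0 < q) (hq1 : q < 1) : StrictMono (symQ q) := by
  intro x y hxy
  have hy : q ^ y < q ^ x := Real.rpow_lt_rpow_of_exponent_gt hq0 hq1 hxy
  have hx : q ^ (-x) < q ^ (-y) := Real.rpow_lt_rpow_of_exponent_gt hq0 hq1 (neg_lt_neg hxy)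
  have hd : q - q⁻¹ < 0 := by
    have : 1 < q⁻¹ := one_lt_inv₀ hq0 |>.mpr hq1
    linarith
  exact div_lt_div_of_neg_of_lt hd (show q ^ y - q ^ (-y) < q ^ x - q ^ (-x) by linarith)

lemma symQ_pos (hq0 : 0 < q) (hq1 : q < 1) {x : ℝ} (hx : 0 < x) : 0 < symQ q x := by
  simpa [symQ] using symQ_strictMono hq0 hq1 hx

variable {η : ℝ}

lemma Lcoef_one (hq0 : 0 < q) (hq1 : q < 1) (hη : -1 < η) : Lcoef q η 1 = 1 := by
  rw [Lcoef, Nat.cast_one, div_self (symQ_pos hq0 hq1 (by linarith)).ne']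

lemma abs_Lcoef_le_one (hq0 : 0 < q) (hq1 : q < 1) (hη : -1 < η) {n : ℕ} (hn : 1 ≤ n) :
    |Lcoef q η n| ≤ 1 := by
  have h1 : 0 < symQ q (1 + η) := symQ_pos hq0 hq1 (by linarith)
  have hle : symQ q (1 + η) ≤ symQ q (n + η) :=
    (symQ_strictMono hq0 hq1).monotone (by linarith [(by exact_mod_cast hn : (1 : ℝ) ≤ n)])
  rw [Lcoef, abs_of_pos (div_pos h1 (h1.trans_le hle))]
  exact div_le_one_of_le₀ hle (h1.trans_le hle).le

end symQ

section PowerSeries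

variable {b : ℕ → ℂ} {F : ℂ → ℂ} {z : ℂ}

lemma taylorCoeff_one : taylorCoeff F 1 = deriv F 0 := by
  simp [taylorCoeff]

lemma taylorCoeff_two : taylorCoeff F 2 = deriv (deriv F) 0 / 2 := by
  simp [taylorCoeff, iteratedDeriv_succ]

lemma tsum_mul_zero_pow : ∑' n, b n * (0 : ℂ) ^ n = b 0 := by
  rw [tsum_eq_single 0 fun n hn => by simp [zero_pow hn]]
  simp

lemma le_radius_ofScalars (h : Summable fun n => b n * z ^ n) :
    (‖z‖₊ : ENNReal) ≤ (ofScalars ℂ b).radius :=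
  (ofScalars ℂ b).le_radius_of_tendsto (l := 0) <| by
    simpa [norm_mul, norm_pow] using h.tendsto_atTop_zero.norm

lemma hasFPowerSeriesOnBall_tsum (hz : z ≠ 0) (h : Summable fun n => b n * z ^ n) :
    HasFPowerSeriesOnBall (fun w => ∑' n, b n * w ^ n) (ofScalars ℂ b) 0 ‖z‖₊ := by
  have hr := le_radius_ofScalars h
  have hpos : (0 : ENNReal) < ‖z‖₊ := by simpa using hz
  have hp := ((ofScalars ℂ b).hasFPowerSeriesOnBall (hpos.trans_le hr)).mono hpos hr
  have hsum : (ofScalars ℂ b).sum = fun w => ∑' n, b n * w ^ n := ofScalarsSum_eq_tsum b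
  rwa [hsum] at hp

lemma hasDerivAt_tsum_of_eventually_hasSum
    (h : ∀ᶠ z in 𝓝[≠] 0, HasSum (fun n => b n * z ^ n) (F z)) :
    HasDerivAt (fun w => ∑' n, b n * w ^ n) (b 1) 0 := by
  obtain ⟨z, hz, hz0⟩ := (h.and self_mem_nhdsWithin).exists
  simpa using (hasFPowerSeriesOnBall_tsum hz0 hz.summable).hasFPowerSeriesAt.hasDerivAt

lemma eq_taylorCoeff_of_eventually_eq_tsum (hF : AnalyticAt ℂ F 0)
    (hb : ∀ᶠ z in 𝓝 0, F z = ∑' n, b n * z ^ n) (hne : ∃ᶠ z in 𝓝[≠] 0, F z ≠ 0) :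
    b = taylorCoeff F := by
  obtain ⟨z, ⟨hFz, hbz⟩, hz0⟩ :=
    ((hne.and_eventually (nhdsWithin_le_nhds hb)).and_eventually self_mem_nhdsWithin).exists
  -- `tsum` is `0` off summability, so `F z ≠ 0` certifies convergence at some `z ≠ 0`.
  have hs : Summable fun n => b n * z ^ n := by
    by_contra hns
    exact hFz (hbz.trans (tsum_eq_zero_of_not_summable hns))
  have hp := (hasFPowerSeriesOnBall_tsum hz0 hs).hasFPowerSeriesAt.congr
    (hb.mono fun _ h => h.symm)
  exact ofScalars_series_injective ℂ ℂ (hp.eq_formalMultilinearSeries hF.hasFPowerSeriesAt)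

lemma hasSum_coeff_succ_iff (hz : z ≠ 0) {s : ℂ} :
    HasSum (fun n => b (n + 1) * z ^ n) s ↔ HasSum (fun n => b n * z ^ n) (b 0 + z * s) := by
  have hshift : (fun n => b (n + 1) * z ^ (n + 1)) = fun n => z * (b (n + 1) * z ^ n) := by
    funext n; ring
  conv_rhs => rw [← hasSum_nat_add_iff' 1]
  rw [Finset.sum_range_one, pow_zero, mul_one, add_sub_cancel_left, hshift,
    hasSum_mul_left_iff hz]

lemma tendsto_mul_nhdsNE {a : ℂ} (ha : a ≠ 0) : Tendsto (a * ·) (𝓝[≠] (0 : ℂ)) (𝓝[≠] 0) :=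
  tendsto_nhdsWithin_iff.mpr
    ⟨by simpa using ((continuous_const_mul a).tendsto 0).mono_left nhdsWithin_le_nhds,
      eventually_mem_nhdsWithin.mono fun _ hz => mul_ne_zero ha hz⟩

lemma eventually_hasSum_sub_neg (h : ∀ᶠ z in 𝓝 0, HasSum (fun n => b n * z ^ n) (F z)) :
    ∀ᶠ z in 𝓝 0, HasSum (fun n => (1 - (-1) ^ n) * b n * z ^ n) (F z - F (-z)) := by
  filter_upwards [h, (continuous_neg.tendsto' (0 : ℂ) 0 neg_zero).eventually h] with z h₁ h₂
  have hterm : (fun n => (1 - (-1) ^ n) * b n * z ^ n)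
      = fun n => b n * z ^ n - b n * (-z) ^ n := by
    funext n
    rw [neg_pow]
    ring
  exact hterm ▸ h₁.sub h₂

lemma eventually_hasSum_sub_neg_div (h : ∀ᶠ z in 𝓝 0, HasSum (fun n => b n * z ^ n) (F z)) :
    ∀ᶠ z in 𝓝[≠] 0, HasSum (fun n => (1 - (-1) ^ (n + 1)) * b (n + 1) * z ^ n)
      ((F z - F (-z)) / z) := by
  filter_upwards [nhdsWithin_le_nhds (eventually_hasSum_sub_neg h), self_mem_nhdsWithin]
    with z hz hz0
  refine (hasSum_coeff_succ_iff (b := fun n => (1 - (-1) ^ n) * b n) hz0).mpr ?_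
  simpa [mul_div_cancel₀ _ hz0] using hz

end PowerSeries

section qDerivative

variable {q : ℝ} {b : ℕ → ℂ} {F : ℂ → ℂ}

lemma hasSum_Dq (hq0 : 0 < q) (hq1 : q ≠ 1) {z : ℂ} (hz : z ≠ 0)
    (h₁ : HasSum (fun n => b n * (q * z) ^ n) (F (q * z)))
    (h₂ : HasSum (fun n => b n * (z / q) ^ n) (F (z / q))) :
    HasSum (fun n => symQ q (n + 1 : ℕ) * b (n + 1) * z ^ n) (Dq q F z) := by
  have hd : (q : ℂ) - (q : ℂ)⁻¹ ≠ 0 := by exact_mod_cast sub_inv_ne_zero hq0 hq1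
  set c : ℕ → ℂ := fun n => ((q : ℂ) - (q : ℂ)⁻¹) * symQ q n * b n with hc
  have hdiff : HasSum (fun n => c n * z ^ n) (F (q * z) - F (z / q)) := by
    have hterm : (fun n => c n * z ^ n) = fun n => b n * (q * z) ^ n - b n * (z / q) ^ n := by
      funext n
      rw [← mul_sub, mul_pow_sub_div_pow hq0 hq1, hc]
      ring
    exact hterm ▸ h₁.sub h₂
  have hc0 : c 0 = 0 := by simp [hc, symQ_zero]
  have hshift := (hasSum_coeff_succ_iff hz (b := c) (s := (F (q * z) - F (z / q)) / z)).mpr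
    (by rwa [hc0, zero_add, mul_div_cancel₀ _ hz])
  have hcoeff : (fun n => symQ q (n + 1 : ℕ) * b (n + 1) * z ^ n)
      = fun n => c (n + 1) * z ^ n / ((q : ℂ) - (q : ℂ)⁻¹) := by
    funext n
    rw [hc, eq_div_iff hd]
    ring
  rw [Dq, if_neg hz, hcoeff, div_mul_eq_div_div_swap]
  exact hshift.div_const _

lemma eventually_hasSum_Dq (hq0 : 0 < q) (hq1 : q ≠ 1)
    (h : ∀ᶠ z in 𝓝[≠] 0, HasSum (fun n => b n * z ^ n) (F z)) :
    ∀ᶠ z in 𝓝[≠] 0, HasSum (fun n => symQ q (n + 1 : ℕ) * b (n + 1) * z ^ n) (Dq q F z) := by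
  have hq : (q : ℂ) ≠ 0 := by exact_mod_cast hq0.ne'
  filter_upwards [(tendsto_mul_nhdsNE hq).eventually h,
    (tendsto_mul_nhdsNE (inv_ne_zero hq)).eventually h, self_mem_nhdsWithin] with z h₁ h₂ hz
  rw [← div_eq_inv_mul] at h₂
  exact hasSum_Dq hq0 hq1 hz h₁ h₂

lemma eventually_hasSum_mul_Dq (hq0 : 0 < q) (hq1 : q ≠ 1)
    (h : ∀ᶠ z in 𝓝[≠] 0, HasSum (fun n => b n * z ^ n) (F z)) :
    ∀ᶠ z in 𝓝[≠] 0, HasSum (fun n : ℕ => (symQ q n : ℂ) * b n * z ^ n) (z * Dq q F z) := by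
  filter_upwards [eventually_hasSum_Dq hq0 hq1 h, self_mem_nhdsWithin] with z hz hz0
  simpa [symQ_zero] using (hasSum_coeff_succ_iff (b := fun n : ℕ => (symQ q n : ℂ) * b n) hz0).mp hz

end qDerivative

lemma hasDerivAt_cpow_two_mul_cpow_div {A B : ℂ → ℂ} {a b x l m : ℂ} (hA : HasDerivAt A a x)
    (hB : HasDerivAt B b x) (hA1 : A x = 1) (hB2 : B x = 2) :
    HasDerivAt (fun z => (2 * A z ^ l / B z) ^ m) (m * (l * a - b / 2)) x := by
  have hpow := hA.cpow_const (c := l) (by rw [hA1]; exact one_mem_slitPlane)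
  have hquot := (hpow.const_mul (2 : ℂ)).fun_div hB (by rw [hB2]; norm_num)
  have hval : 2 * A x ^ l / B x = 1 := by simp [hA1, hB2]
  convert hquot.cpow_const (c := m) (by rw [hval]; exact one_mem_slitPlane) using 1
  rw [hval]
  simp only [hA1, hB2, one_cpow]
  ring

section Bernardi

variable {q η : ℝ} {b : ℕ → ℂ}

noncomputable def bernardiCoeff (q η : ℝ) (h : ℂ → ℂ) (n : ℕ) : ℂ := Lcoef q η n * taylorCoeff h n

lemma bernardiCoeff_one (hq0 : 0 < q) (hq1 : q < 1) (hη : -1 < η) {h : ℂ → ℂ}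
    (hh1 : deriv h 0 = 1) : bernardiCoeff q η h 1 = 1 := by
  simp [bernardiCoeff, Lcoef_one hq0 hq1 hη, taylorCoeff_one, hh1]

lemma eventually_hasSum_Jop (hq0 : 0 < q) (hq1 : q < 1) (hη : -1 < η) {h : ℂ → ℂ}
    (hh : AnalyticAt ℂ h 0) :
    ∀ᶠ z in 𝓝 0, HasSum (fun n => bernardiCoeff q η h n * z ^ n) (Jop q η h z) := by
  obtain ⟨r, hr⟩ := hh.hasFPowerSeriesAt
  filter_upwards [Metric.eball_mem_nhds 0 hr.r_pos] with z hz
  have hnorm := (ofScalars ℂ (taylorCoeff h)).summable_norm_apply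
    (Metric.eball_subset_eball hr.r_le hz)
  simp only [ofScalars_apply_eq, smul_eq_mul] at hnorm
  refine (Summable.of_norm_bounded_eventually hnorm ?_).hasSum
  filter_upwards [eventually_cofinite_ne 0] with n hn
  rw [bernardiCoeff, mul_assoc, norm_mul, Complex.norm_real, Real.norm_eq_abs]
  exact mul_le_of_le_one_left (norm_nonneg _)
    (abs_Lcoef_le_one hq0 hq1 hη (Nat.one_le_iff_ne_zero.mpr hn))

lemma hasDerivAt_update_Phi (hq0 : 0 < q) (hq1 : q < 1) {h : ℂ → ℂ} (lam mu : ℝ)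
    (hJ : ∀ᶠ z in 𝓝 0, HasSum (fun n => b n * z ^ n) (Jop q η h z)) (hb1 : b 1 = 1) :
    HasDerivAt (Function.update (Phi q η lam mu h) 0 1) (lam * M2v q mu * symQ q 2 * b 2) 0 := by
  have hJ' : ∀ᶠ z in 𝓝[≠] 0, HasSum (fun n => b n * z ^ n) (Jop q η h z) :=
    nhdsWithin_le_nhds hJ
  have hA := eventually_hasSum_Dq hq0 hq1.ne hJ'
  have hB := eventually_hasSum_sub_neg_div hJ
  have hC := eventually_hasSum_Dq hq0 hq1.ne (eventually_hasSum_mul_Dq hq0 hq1.ne hJ')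
  have hD := eventually_hasSum_Dq hq0 hq1.ne (nhdsWithin_le_nhds (eventually_hasSum_sub_neg hJ))
  have hsymQ1 := symQ_one hq0 hq1.ne
  have hP := hasDerivAt_cpow_two_mul_cpow_div (l := lam) (m := mu)
    (hasDerivAt_tsum_of_eventually_hasSum hA) (hasDerivAt_tsum_of_eventually_hasSum hB)
    (by simp [tsum_mul_zero_pow, hb1, hsymQ1]) (by norm_num [tsum_mul_zero_pow, hb1])
  have hQ := hasDerivAt_cpow_two_mul_cpow_div (l := lam) (m := ((1 - mu : ℝ) : ℂ))
    (hasDerivAt_tsum_of_eventually_hasSum hC) (hasDerivAt_tsum_of_eventually_hasSum hD)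
    (by simp [tsum_mul_zero_pow, hb1, hsymQ1]) (by norm_num [tsum_mul_zero_pow, hb1, hsymQ1])
  refine ((hP.mul hQ).congr_of_eventuallyEq ?_).congr_deriv ?_
  · refine eventuallyEq_nhds_of_eventuallyEq_nhdsNE ?_ ?_
    · filter_upwards [hA, hB, hC, hD, self_mem_nhdsWithin] with z hA hB hC hD hz
      simp only [Function.update_of_ne hz, Pi.mul_apply, hA.tsum_eq, hB.tsum_eq, hC.tsum_eq,
        hD.tsum_eq, Phi]
      rw [div_div_eq_mul_div, mul_right_comm 2 z]
    · norm_num [tsum_mul_zero_pow, hb1, hsymQ1]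
  · norm_num [tsum_mul_zero_pow, hb1, hsymQ1, M2v]
    ring

end Bernardi

lemma deriv_eq_one_and_taylorCoeff_two_of_leftInverse {f g : ℂ → ℂ} (hf : AnalyticAt ℂ f 0)
    (hg : AnalyticAt ℂ g 0) (hf0 : f 0 = 0) (hf1 : deriv f 0 = 1)
    (hgf : ∀ᶠ z in 𝓝 0, g (f z) = z) :
    deriv g 0 = 1 ∧ taylorCoeff g 2 = -taylorCoeff f 2 := by
  have hgf' : ∀ᶠ z in 𝓝 0, AnalyticAt ℂ g (f z) :=
    (hf0 ▸ hf.continuousAt.tendsto).eventually hg.eventually_analyticAt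
  have hchain : ∀ᶠ z in 𝓝 0, deriv g (f z) * deriv f z = 1 := by
    filter_upwards [hgf.eventually_nhds, hgf', hf.eventually_analyticAt] with z hz hgz hfz
    rw [← deriv_comp z hgz.differentiableAt hfz.differentiableAt,
      (show g ∘ f =ᶠ[𝓝 z] id from hz).deriv_eq, deriv_id]
  have hg1 : deriv g 0 = 1 := by simpa [hf0, hf1] using hchain.self_of_nhds
  refine ⟨hg1, ?_⟩
  have hd2 := ((hf0 ▸ hg.deriv.differentiableAt.hasDerivAt).comp 0
    hf.differentiableAt.hasDerivAt).mul hf.deriv.differentiableAt.hasDerivAt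
  have hd0 := hd2.unique ((hasDerivAt_const (0 : ℂ) (1 : ℂ)).congr_of_eventuallyEq hchain)
  simp only [Function.comp_apply, hf0, hf1, hg1] at hd0
  rw [taylorCoeff_two, taylorCoeff_two]
  linear_combination hd0 / 2

section Subordination

variable {q η lam mu : ℝ}

lemma taylorCoeff_one_cayley {w : ℂ → ℂ} (hw : DifferentiableAt ℂ w 0) (hw0 : w 0 = 0) :
    taylorCoeff (fun z => (1 + w z) / (1 - w z)) 1 = 2 * deriv w 0 := by
  have hd := (hw.hasDerivAt.const_add 1).fun_div (hw.hasDerivAt.const_sub 1) (by simp [hw0])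
  rw [taylorCoeff_one, hd.deriv, hw0]
  ring

theorem second_coeff_of_subordinate (hq0 : 0 < q) (hq1 : q < 1) (hη : -1 < η)
    {h φ w : ℂ → ℂ} {E c : ℕ → ℂ} (hh : AnalyticAt ℂ h 0) (hh1 : deriv h 0 = 1)
    (hφ : AnalyticAt ℂ φ 0) (hφ0 : φ 0 = 1) (hφE : ∀ᶠ z in 𝓝 0, φ z = ∑' n, E n * z ^ n)
    (hw : AnalyticAt ℂ w 0) (hw0 : w 0 = 0)
    (hsub : ∀ᶠ z in 𝓝[≠] 0, Phi q η lam mu h z = φ (w z))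
    (hc : ∀ᶠ z in 𝓝 0, (1 + w z) / (1 - w z) = ∑' n, c n * z ^ n) :
    lam * M2v q mu * symQ q 2 * Lcoef q η 2 * taylorCoeff h 2 = 1 / 2 * E 1 * c 1 := by
  have hE1 : E 1 = deriv φ 0 := by
    rw [eq_taylorCoeff_of_eventually_eq_tsum hφ hφE ?_, taylorCoeff_one]
    exact ((hφ.continuousAt.eventually_ne (by simp [hφ0] : φ 0 ≠ 0)).filter_mono
      nhdsWithin_le_nhds).frequently
  have hcayley : AnalyticAt ℂ (fun z => (1 + w z) / (1 - w z)) 0 :=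
    (analyticAt_const.add hw).div (analyticAt_const.sub hw) (by simp [hw0])
  have hc1 : c 1 = 2 * deriv w 0 := by
    rw [eq_taylorCoeff_of_eventually_eq_tsum hcayley hc ?_,
      taylorCoeff_one_cayley hw.differentiableAt hw0]
    have hne : (1 + w 0) / (1 - w 0) ≠ 0 := by simp [hw0]
    exact ((hcayley.continuousAt.eventually_ne hne).filter_mono nhdsWithin_le_nhds).frequently
  have hPhi := hasDerivAt_update_Phi hq0 hq1 lam mu (eventually_hasSum_Jop hq0 hq1 hη hh)
    (bernardiCoeff_one hq0 hq1 hη hh1)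
  have hφw : (fun z => φ (w z)) =ᶠ[𝓝 0] Function.update (Phi q η lam mu h) 0 1 := by
    refine eventuallyEq_nhds_of_eventuallyEq_nhdsNE ?_ (by simp [hw0, hφ0])
    filter_upwards [hsub, self_mem_nhdsWithin] with z hz hz0
    rw [Function.update_of_ne hz0, hz]
  have hchain : HasDerivAt (fun z => φ (w z)) (deriv φ 0 * deriv w 0) 0 :=
    hφ.differentiableAt.hasDerivAt.comp_of_eq 0 hw.differentiableAt.hasDerivAt hw0.symm
  have hderiv := hchain.unique (hPhi.congr_of_eventuallyEq hφw)
  rw [bernardiCoeff] at hderiv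
  rw [hE1, hc1]
  linear_combination -hderiv

end Subordination

theorem coeff_relations_bernardi_general
    (q : ℝ) (hq0 : 0 < q) (hq1 : q < 1)
    (f g : ℂ → ℂ) (a : ℕ → ℂ)
    (hf : AnalyticOnNhd ℂ f (ball 0 1)) (hf0 : f 0 = 0) (hf'0 : deriv f 0 = 1)
    (hfa : ∀ z ∈ ball (0 : ℂ) 1, f z = ∑' n, a n * z ^ n)
    (hg : AnalyticOnNhd ℂ g (ball 0 1))
    (hgf : ∀ᶠ z in nhds (0 : ℂ), g (f z) = z)
    (φ : ℂ → ℂ) (E : ℕ → ℂ) (E1 : ℝ)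
    (hφa : AnalyticOnNhd ℂ φ (ball 0 1)) (hφ0 : φ 0 = 1)
    (hφE : ∀ z ∈ ball (0 : ℂ) 1, φ z = ∑' n, E n * z ^ n)
    (hE1 : E 1 = (E1 : ℂ)) (hE1pos : 0 < E1)
    (lam : ℝ)
    (η : ℝ) (hη : -1 < η)
    (mu : ℝ)
    (u v : ℂ → ℂ) (hu : IsSchwarz u) (hv : IsSchwarz v)
    (hsubf : ∀ z ∈ ball (0 : ℂ) 1, z ≠ 0 → Phi q η lam mu f z = φ (u z))
    (hsubg : ∀ w ∈ ball (0 : ℂ) 1, w ≠ 0 → Phi q η lam mu g w = φ (v w))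
    (c d : ℕ → ℂ)
    (hc : ∀ z ∈ ball (0 : ℂ) 1, (1 + u z) / (1 - u z) = ∑' n, c n * z ^ n)
    (hd : ∀ w ∈ ball (0 : ℂ) 1, (1 + v w) / (1 - v w) = ∑' n, d n * w ^ n)
    :
    d 1 = -c 1 ∧
      (lam : ℂ) * (M2v q mu : ℂ) * (symQ q 2 : ℂ) * (Lcoef q η 2 : ℂ) * a 2 =
        1 / 2 * (E1 : ℂ) * c 1 := by
  have h0 : (0 : ℂ) ∈ ball (0 : ℂ) 1 := mem_ball_self one_pos
  have hball : ball (0 : ℂ) 1 ∈ 𝓝 0 := ball_mem_nhds 0 one_pos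
  have hpunct {P : ℂ → Prop} (hP : ∀ z ∈ ball (0 : ℂ) 1, z ≠ 0 → P z) : ∀ᶠ z in 𝓝[≠] 0, P z :=
    eventually_nhdsWithin_iff.mpr (eventually_of_mem hball hP)
  obtain ⟨hg1, hg2⟩ :=
    deriv_eq_one_and_taylorCoeff_two_of_leftInverse (hf 0 h0) (hg 0 h0) hf0 hf'0 hgf
  have hfc := second_coeff_of_subordinate hq0 hq1 hη (hf 0 h0) hf'0 (hφa 0 h0) hφ0
    (eventually_of_mem hball hφE) (hu.1 0 h0) hu.2.1 (hpunct hsubf) (eventually_of_mem hball hc)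
  have hgd := second_coeff_of_subordinate hq0 hq1 hη (hg 0 h0) hg1 (hφa 0 h0) hφ0
    (eventually_of_mem hball hφE) (hv.1 0 h0) hv.2.1 (hpunct hsubg) (eventually_of_mem hball hd)
  have ha : a = taylorCoeff f := eq_taylorCoeff_of_eventually_eq_tsum (hf 0 h0)
    (eventually_of_mem hball hfa)
    ((hf'0 ▸ (hf 0 h0).differentiableAt.hasDerivAt).eventually_ne one_ne_zero).frequently
  have hE1ne : (E1 : ℂ) ≠ 0 := by exact_mod_cast hE1pos.ne'
  rw [hE1] at hfc hgd
  rw [hg2] at hgd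
  refine ⟨mul_left_cancel₀ hE1ne ?_, ha ▸ hfc⟩
  linear_combination -2 * hgd - 2 * hfc

theorem coeff_relations_bernardi
    (q : ℝ) (hq0 : 0 < q) (hq1 : q < 1)
    (f g : ℂ → ℂ) (a : ℕ → ℂ)
    (hf : AnalyticOnNhd ℂ f (ball 0 1)) (hf0 : f 0 = 0) (hf'0 : deriv f 0 = 1)
    (hfa : ∀ z ∈ ball (0 : ℂ) 1, f z = ∑' n, a n * z ^ n)
    (ha0 : a 0 = 0) (ha1 : a 1 = 1)
    (hfinj : InjOn f (ball 0 1))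
    (hg : AnalyticOnNhd ℂ g (ball 0 1)) (hg0 : g 0 = 0)
    (hginj : InjOn g (ball 0 1))
    (hgf : ∀ᶠ z in nhds (0 : ℂ), g (f z) = z)
    (φ : ℂ → ℂ) (E : ℕ → ℂ) (E1 : ℝ)
    (hφa : AnalyticOnNhd ℂ φ (ball 0 1)) (hφ0 : φ 0 = 1)
    (hφre : ∀ z ∈ ball (0 : ℂ) 1, 0 < (φ z).re)
    (hφE : ∀ z ∈ ball (0 : ℂ) 1, φ z = ∑' n, E n * z ^ n)
    (hE0 : E 0 = 1) (hE1 : E 1 = (E1 : ℂ)) (hE1pos : 0 < E1)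
    (lam : ℝ) (hlam : 1 ≤ lam)
    (η : ℝ) (hη : -1 < η)
    (mu : ℝ) (hmu : 0 ≤ mu)
    (u v : ℂ → ℂ) (hu : IsSchwarz u) (hv : IsSchwarz v)
    (hsubf : ∀ z ∈ ball (0 : ℂ) 1, z ≠ 0 → Phi q η lam mu f z = φ (u z))
    (hsubg : ∀ w ∈ ball (0 : ℂ) 1, w ≠ 0 → Phi q η lam mu g w = φ (v w))
    (c d : ℕ → ℂ) (hc0 : c 0 = 1) (hd0 : d 0 = 1)
    (hc : ∀ z ∈ ball (0 : ℂ) 1, (1 + u z) / (1 - u z) = ∑' n, c n * z ^ n)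
    (hd : ∀ w ∈ ball (0 : ℂ) 1, (1 + v w) / (1 - v w) = ∑' n, d n * w ^ n)
    :
    d 1 = -c 1 ∧
      (lam : ℂ) * (M2v q mu : ℂ) * (symQ q 2 : ℂ) * (Lcoef q η 2 : ℂ) * a 2 =
        1 / 2 * (E1 : ℂ) * c 1 :=
  coeff_relations_bernardi_general q hq0 hq1 f g a hf hf0 hf'0 hfa hg hgf φ E E1 hφa hφ0 hφE hE1
    hE1pos lam η hη mu u v hu hv hsubf hsubg c d hc hd
end
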